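/- Let E ∈ ℝ² with E ≠ 0, let R, X ∈ ℝ with X ≠ 0, and let Imax > 0. Define P(x) := (3/2)R‖x‖² + (3/2)⟨E,x⟩ and V(x) := (R² + X²)‖x‖² + 2⟨ZᵀE, x⟩ + ‖E‖² for x ∈ ℝ². Then the image set { (P(x), V(x)) : x ∈ ℝ², ‖x‖ ≤ Imax } is a convex subset of ℝ². -/

import Mathlib

/-!
In the coordinates `t = ‖x‖²`, `u = ⟪E, x⟫`, `s = ⟪J E, x⟫`, with `J` the quarter turn, `(P, V)` is
an affine function of `(t, u, s)`, and the current-limited disc lands in the convex solid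
paraboloid `u² + s² ≤ ‖E‖² t`, `t ≤ Imax²` (on its surface; the disc reaches every surface point).
Since `X ≠ 0`, the linear part of this affine map has a kernel direction `d` that decreases `t`
and is not parallel to the `t`-axis. Sliding any point of the solid along `d` reaches the surface
without changing `(P, V)` or increasing `t`, so the region is the affine image of the whole
convex solid.
-/

open scoped RealInnerProductSpace

/-- The impedance matrix `Z` with rows `(R,-X)` and `(X,R)`. -/
def Zmat (R X : ℝ) : Matrix (Fin 2) (Fin 2) ℝ := !![R, -X; X, R]

/-- Interpret a plain vector `Fin 2 → ℝ` as an element of Euclidean space `ℝ²`. -/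
noncomputable def toE (v : Fin 2 → ℝ) : EuclideanSpace ℝ (Fin 2) := WithLp.toLp 2 v

/-- The vector `Zᵀ E ∈ ℝ²`. -/
noncomputable def ZtE (R X : ℝ) (E : EuclideanSpace ℝ (Fin 2)) : EuclideanSpace ℝ (Fin 2) :=
  toE ((Zmat R X).transpose.mulVec (fun i => E i))

open Metric

theorem exists_nonneg_quadratic_eq_zero {a b c : ℝ} (ha : 0 < a) (hc : c ≤ 0) :
    ∃ l, 0 ≤ l ∧ a * (l * l) + b * l + c = 0 := by
  have hdisc : 0 ≤ discrim a b c := by unfold discrim; nlinarith [sq_nonneg b]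
  refine ⟨(-b + √(discrim a b c)) / (2 * a), div_nonneg ?_ (by positivity), ?_⟩
  · have : |b| ≤ √(discrim a b c) := Real.abs_le_sqrt (by unfold discrim; nlinarith)
    linarith [le_abs_self b]
  · exact (quadratic_eq_zero_iff ha.ne' (Real.mul_self_sqrt hdisc).symm _).2 (Or.inl rfl)

def truncParaboloid (k r : ℝ) : Set (ℝ × ℝ × ℝ) :=
  {q | q.2.1 ^ 2 + q.2.2 ^ 2 ≤ k * q.1 ∧ q.1 ≤ r}

theorem convex_truncParaboloid (k r : ℝ) : Convex ℝ (truncParaboloid k r) := by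
  rintro ⟨t₁, u₁, s₁⟩ ⟨h₁, h₁r⟩ ⟨t₂, u₂, s₂⟩ ⟨h₂, h₂r⟩ a b ha hb hab
  simp only [Prod.smul_mk, Prod.mk_add_mk, smul_eq_mul] at *
  obtain rfl : b = 1 - a := by linarith
  refine ⟨?_, by nlinarith⟩
  calc (a * u₁ + (1 - a) * u₂) ^ 2 + (a * s₁ + (1 - a) * s₂) ^ 2
      = a * (u₁ ^ 2 + s₁ ^ 2) + (1 - a) * (u₂ ^ 2 + s₂ ^ 2)
          - a * (1 - a) * ((u₁ - u₂) ^ 2 + (s₁ - s₂) ^ 2) := by ring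
    _ ≤ a * (k * t₁) + (1 - a) * (k * t₂) := by
        nlinarith [mul_nonneg ha hb, mul_le_mul_of_nonneg_left h₁ ha,
          mul_le_mul_of_nonneg_left h₂ hb, sq_nonneg (u₁ - u₂), sq_nonneg (s₁ - s₂)]
    _ = k * (a * t₁ + (1 - a) * t₂) := by ring

theorem exists_add_smul_on_paraboloid {k : ℝ} {q d : ℝ × ℝ × ℝ}
    (hq : q.2.1 ^ 2 + q.2.2 ^ 2 ≤ k * q.1) (hd : 0 < d.2.1 ^ 2 + d.2.2 ^ 2) :
    ∃ l : ℝ, 0 ≤ l ∧ (q + l • d).2.1 ^ 2 + (q + l • d).2.2 ^ 2 = k * (q + l • d).1 := by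
  obtain ⟨l, hl, hroot⟩ := exists_nonneg_quadratic_eq_zero
    (b := 2 * (q.2.1 * d.2.1 + q.2.2 * d.2.2) - k * d.1) hd (sub_nonpos.2 hq)
  refine ⟨l, hl, ?_⟩
  simp only [Prod.fst_add, Prod.snd_add, Prod.smul_fst, Prod.smul_snd, smul_eq_mul]
  linear_combination hroot

section InnerProductSpace

variable {V : Type*} [NormedAddCommGroup V] [InnerProductSpace ℝ V] {E F : V}

theorem norm_smul_add_smul_sq (hEF : ⟪E, F⟫ = 0) (hF : ‖F‖ = ‖E‖) (u s : ℝ) :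
    ‖u • E + s • F‖ ^ 2 = (u ^ 2 + s ^ 2) * ‖E‖ ^ 2 := by
  rw [norm_add_sq_real, real_inner_smul_left, real_inner_smul_right, hEF, norm_smul,
    norm_smul, hF, Real.norm_eq_abs, Real.norm_eq_abs, mul_pow, mul_pow, sq_abs, sq_abs]
  ring

theorem inner_sq_add_inner_sq_le (hEF : ⟪E, F⟫ = 0) (hF : ‖F‖ = ‖E‖) (x : V) :
    ⟪E, x⟫ ^ 2 + ⟪F, x⟫ ^ 2 ≤ ‖E‖ ^ 2 * ‖x‖ ^ 2 := by
  set w := ⟪E, x⟫ • E + ⟪F, x⟫ • F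
  have hw : ⟪w, x⟫ = ⟪E, x⟫ ^ 2 + ⟪F, x⟫ ^ 2 := by
    simp only [w, inner_add_left, real_inner_smul_left]; ring
  have hcs : ⟪w, x⟫ ^ 2 ≤ ‖w‖ ^ 2 * ‖x‖ ^ 2 := by
    rw [← mul_pow, ← sq_abs]
    exact pow_le_pow_left₀ (abs_nonneg _) (abs_real_inner_le_norm w x) 2
  rw [hw, norm_smul_add_smul_sq hEF hF, mul_assoc, sq] at hcs
  rcases (add_nonneg (sq_nonneg ⟪E, x⟫) (sq_nonneg ⟪F, x⟫)).eq_or_lt with h0 | hpos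
  · rw [← h0]; positivity
  · exact le_of_mul_le_mul_left hcs hpos

theorem exists_norm_sq_inner_inner_eq (hE : E ≠ 0) (hEF : ⟪E, F⟫ = 0) (hF : ‖F‖ = ‖E‖)
    {t u s : ℝ} (h : u ^ 2 + s ^ 2 = ‖E‖ ^ 2 * t) :
    ∃ x : V, ‖x‖ ^ 2 = t ∧ ⟪E, x⟫ = u ∧ ⟪F, x⟫ = s := by
  have hE2 : ‖E‖ ^ 2 ≠ 0 := by positivity
  refine ⟨(‖E‖ ^ 2)⁻¹ • (u • E + s • F), ?_, ?_, ?_⟩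
  · rw [norm_smul, mul_pow, norm_smul_add_smul_sq hEF hF, h, norm_inv, norm_pow, norm_norm]
    field_simp
  · simp [inner_add_right, real_inner_smul_right, hEF]
    field_simp
  · simp [inner_add_right, real_inner_smul_right, real_inner_comm E F, hEF, hF]
    field_simp

theorem convex_image_closedBall_of_map_ker {W : Type*} [AddCommGroup W] [Module ℝ W]
    (hE : E ≠ 0) (hEF : ⟪E, F⟫ = 0) (hF : ‖F‖ = ‖E‖) (L : ℝ × ℝ × ℝ →ₗ[ℝ] W)
    {d : ℝ × ℝ × ℝ} (hLd : L d = 0) (hd₁ : d.1 ≤ 0) (hd₂ : 0 < d.2.1 ^ 2 + d.2.2 ^ 2)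
    {r : ℝ} (hr : 0 ≤ r) :
    Convex ℝ ((fun x : V => L (‖x‖ ^ 2, ⟪E, x⟫, ⟪F, x⟫)) '' closedBall 0 r) := by
  suffices h : (fun x : V => L (‖x‖ ^ 2, ⟪E, x⟫, ⟪F, x⟫)) '' closedBall 0 r =
      L '' truncParaboloid (‖E‖ ^ 2) (r ^ 2) from
    h ▸ (convex_truncParaboloid _ _).linear_image L
  apply subset_antisymm
  · rintro _ ⟨x, hx, rfl⟩
    exact ⟨_, ⟨inner_sq_add_inner_sq_le hEF hF x,
      pow_le_pow_left₀ (norm_nonneg x) (mem_closedBall_zero_iff.1 hx) 2⟩, rfl⟩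
  · rintro _ ⟨q, ⟨hq, hqr⟩, rfl⟩
    obtain ⟨l, hl, hsurf⟩ := exists_add_smul_on_paraboloid hq hd₂
    obtain ⟨x, hx, hEx, hFx⟩ := exists_norm_sq_inner_inner_eq hE hEF hF hsurf
    refine ⟨x, mem_closedBall_zero_iff.2 ?_, ?_⟩
    · refine (pow_le_pow_iff_left₀ (norm_nonneg x) hr two_ne_zero).1 ?_
      rw [hx, Prod.fst_add, Prod.smul_fst, smul_eq_mul]
      linarith [mul_nonpos_of_nonneg_of_nonpos hl hd₁]
    · show L _ = L q
      rw [hx, hEx, hFx, Prod.mk.eta, map_add, map_smul, hLd, smul_zero, add_zero]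

end InnerProductSpace

noncomputable def quarterTurn (v : EuclideanSpace ℝ (Fin 2)) : EuclideanSpace ℝ (Fin 2) :=
  !₂[v 1, -v 0]

theorem inner_quarterTurn_self (v : EuclideanSpace ℝ (Fin 2)) : ⟪v, quarterTurn v⟫ = 0 := by
  simp [quarterTurn, PiLp.inner_apply, Fin.sum_univ_two]
  ring

theorem norm_quarterTurn (v : EuclideanSpace ℝ (Fin 2)) : ‖quarterTurn v‖ = ‖v‖ := by
  simp [quarterTurn, EuclideanSpace.norm_eq, Fin.sum_univ_two, add_comm]

theorem ZtE_eq (R X : ℝ) (E : EuclideanSpace ℝ (Fin 2)) :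
    ZtE R X E = R • E + X • quarterTurn E := by
  ext i
  fin_cases i <;> simp [ZtE, toE, Zmat, quarterTurn]
  ring

noncomputable def pvLinear (R X : ℝ) : ℝ × ℝ × ℝ →ₗ[ℝ] ℝ × ℝ where
  toFun q :=
    ((3 / 2) * R * q.1 + (3 / 2) * q.2.1, (R ^ 2 + X ^ 2) * q.1 + 2 * (R * q.2.1 + X * q.2.2))
  map_add' _ _ := by ext <;> simp <;> ring
  map_smul' _ _ := by ext <;> simp <;> ring

theorem pvRegion_eq_image (E : EuclideanSpace ℝ (Fin 2)) (R X Imax : ℝ) :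
    {p : ℝ × ℝ | ∃ x : EuclideanSpace ℝ (Fin 2), ‖x‖ ≤ Imax ∧
      p = ((3 / 2) * R * ‖x‖ ^ 2 + (3 / 2) * ⟪E, x⟫,
           (R ^ 2 + X ^ 2) * ‖x‖ ^ 2 + 2 * ⟪ZtE R X E, x⟫ + ‖E‖ ^ 2)} =
      (((0 : ℝ), ‖E‖ ^ 2) + ·) '' ((fun x => pvLinear R X (‖x‖ ^ 2, ⟪E, x⟫, ⟪quarterTurn E, x⟫)) ''
        closedBall 0 Imax) := by
  rw [Set.image_image]
  ext p
  simp [pvLinear, ZtE_eq, inner_add_left, real_inner_smul_left, eq_comm, Prod.ext_iff,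
    add_comm (‖E‖ ^ 2)]

theorem stmt3 (E : EuclideanSpace ℝ (Fin 2)) (hE : E ≠ 0) (R X : ℝ) (hX : X ≠ 0)
    (Imax : ℝ) (hI : 0 < Imax) :
    Convex ℝ {p : ℝ × ℝ | ∃ x : EuclideanSpace ℝ (Fin 2), ‖x‖ ≤ Imax ∧
      p = ((3 / 2) * R * ‖x‖ ^ 2 + (3 / 2) * ⟪E, x⟫,
           (R ^ 2 + X ^ 2) * ‖x‖ ^ 2 + 2 * ⟪ZtE R X E, x⟫ + ‖E‖ ^ 2)} := by
  set d : ℝ × ℝ × ℝ := (-2 * X ^ 2, 2 * R * X ^ 2, X * (X ^ 2 - R ^ 2))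
  have hLd : pvLinear R X d = 0 := by ext <;> simp [pvLinear, d] <;> ring
  have hd₂ : 0 < d.2.1 ^ 2 + d.2.2 ^ 2 := by
    have hsq : d.2.1 ^ 2 + d.2.2 ^ 2 = X ^ 2 * (R ^ 2 + X ^ 2) ^ 2 := by simp only [d]; ring
    have hRX : 0 < R ^ 2 + X ^ 2 := by positivity
    rw [hsq]
    positivity
  rw [pvRegion_eq_image]
  exact (convex_image_closedBall_of_map_ker hE (inner_quarterTurn_self E) (norm_quarterTurn E)
    (pvLinear R X) hLd (by simp only [d]; linarith [sq_nonneg X]) hd₂ hI.le).translate _
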